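/- arXiv:1709.05907 — 3 statements merged into one kernel-verified Lean document; each statement's English description precedes it below -/
import Mathlib

section
/- For every β with 1/2 ≤ β ≤ 1, the chain of inequalities C_β(X,W) ≤ δ_β(X,W) ≤ β·C_P(X,W) holds. -/
open Filter Real

/-- Shannon entropy (base 2) of a finitely supported probability mass function. -/
noncomputable def ent {A : Type} [Fintype A] (q : A → ℝ) : ℝ :=
  - ∑ a, q a * Real.logb 2 (q a)

/-- Joint law of the first `n+1` samples of a Markov chain with initial distribution `μ`
and transition matrix `P`. -/
noncomputable def chainJoint {X : Type} (μ : X → ℝ) (P : X → X → ℝ) (n : ℕ)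
    (x : Fin (n + 1) → X) : ℝ :=
  μ (x 0) * ∏ i : Fin n, P (x i.castSucc) (x i.succ)

/-- Joint law of `(Y_1, …, Y_{n+1})`, where `Y` is the stationary process obtained by
observing the stationary Markov chain `X ~ (μ, P)` through the channel `W`. -/
noncomputable def obsJoint {X Y : Type} [Fintype X] (μ : X → ℝ) (P : X → X → ℝ)
    (W : X → Y → ℝ) (n : ℕ) (y : Fin (n + 1) → Y) : ℝ :=
  ∑ x : Fin (n + 1) → X, chainJoint μ P n x * ∏ i, W (x i) (y i)

/-- A finite stochastic matrix is irreducible and aperiodic iff it is primitive, i.e., some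
power (and hence all larger powers) of it is entrywise positive. -/
def IrreducibleAperiodic {X : Type} [Fintype X] [DecidableEq X] (P : Matrix X X ℝ) : Prop :=
  ∃ N : ℕ, ∀ n ≥ N, ∀ x x' : X, 0 < (P ^ n) x x'

section Defs

variable {X Y : Type} [Fintype X] [Fintype Y]

/-- Marginal distribution `ν` of each `Y_k`: `νᵀ = μᵀ W`. -/
noncomputable def nuDist (μ : X → ℝ) (W : X → Y → ℝ) : Y → ℝ := fun y => ∑ x, μ x * W x y

/-- Joint distribution of `(Y_1, Y_2)`. -/
noncomputable def jointYY (μ : X → ℝ) (P : X → X → ℝ) (W : X → Y → ℝ) : Y × Y → ℝ :=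
  fun p => ∑ x, ∑ x', μ x * W x p.1 * P x x' * W x' p.2

/-- Joint distribution of `(X_1, Y_2)`. -/
noncomputable def jointX1Y2 (μ : X → ℝ) (P : X → X → ℝ) (W : X → Y → ℝ) : X × Y → ℝ :=
  fun p => ∑ x', μ p.1 * P p.1 x' * W x' p.2

/-- Joint distribution of `(X_2, Y_1)`. -/
noncomputable def jointX2Y1 (μ : X → ℝ) (P : X → X → ℝ) (W : X → Y → ℝ) : X × Y → ℝ :=
  fun p => ∑ x, μ x * W x p.2 * P x p.1

/-- Joint distribution of `(X_1, X_2)`. -/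
noncomputable def jointXX (μ : X → ℝ) (P : X → X → ℝ) : X × X → ℝ :=
  fun p => μ p.1 * P p.1 p.2

/-- Joint distribution of `(X_1, Y_1)`. -/
noncomputable def jointX1Y1 (μ : X → ℝ) (W : X → Y → ℝ) : X × Y → ℝ :=
  fun p => μ p.1 * W p.1 p.2

/-- Joint distribution of `(X_2, Y_2)`. -/
noncomputable def jointX2Y2 (μ : X → ℝ) (P : X → X → ℝ) (W : X → Y → ℝ) : X × Y → ℝ :=
  fun p => ∑ x, μ x * P x p.1 * W p.1 p.2

/-- Joint distribution of `(X_1, X_2, Y_2)`. -/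
noncomputable def jointX1X2Y2 (μ : X → ℝ) (P : X → X → ℝ) (W : X → Y → ℝ) :
    X × X × Y → ℝ :=
  fun p => μ p.1 * P p.1 p.2.1 * W p.2.1 p.2.2

/-- Joint distribution of `(X_1, X_2, Y_1)`. -/
noncomputable def jointX1X2Y1 (μ : X → ℝ) (P : X → X → ℝ) (W : X → Y → ℝ) :
    X × X × Y → ℝ :=
  fun p => μ p.1 * W p.1 p.2.2 * P p.1 p.2.1

/-- Joint distribution of `(X_1, Y_1, Y_2)`. -/
noncomputable def jointX1Y1Y2 (μ : X → ℝ) (P : X → X → ℝ) (W : X → Y → ℝ) :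
    X × Y × Y → ℝ :=
  fun p => ∑ x', μ p.1 * W p.1 p.2.1 * P p.1 x' * W x' p.2.2

/-- Conditional entropy `H(Y_2 | Y_1) = H(Y_1, Y_2) − H(Y_1)`. -/
noncomputable def HY2gY1 (μ : X → ℝ) (P : X → X → ℝ) (W : X → Y → ℝ) : ℝ :=
  ent (jointYY μ P W) - ent (nuDist μ W)

/-- Conditional entropy `H(Y_2 | X_1) = H(X_1, Y_2) − H(X_1)`. -/
noncomputable def HY2gX1 (μ : X → ℝ) (P : X → X → ℝ) (W : X → Y → ℝ) : ℝ :=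
  ent (jointX1Y2 μ P W) - ent μ

/-- Conditional entropy `H(Y_1 | X_2) = H(X_2, Y_1) − H(X_2)`. -/
noncomputable def HY1gX2 (μ : X → ℝ) (P : X → X → ℝ) (W : X → Y → ℝ) : ℝ :=
  ent (jointX2Y1 μ P W) - ent μ

/-- Mutual information `I(X_1; X_2) = H(X_1) + H(X_2) − H(X_1, X_2)` (stationary case). -/
noncomputable def IX1X2 (μ : X → ℝ) (P : X → X → ℝ) : ℝ :=
  2 * ent μ - ent (jointXX μ P)

/-- Mutual information `I(Y_1; Y_2) = H(Y_1) + H(Y_2) − H(Y_1, Y_2)` (stationary case). -/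
noncomputable def IY1Y2 (μ : X → ℝ) (P : X → X → ℝ) (W : X → Y → ℝ) : ℝ :=
  2 * ent (nuDist μ W) - ent (jointYY μ P W)

/-- The lumpability cost `C_L(X, W) = H(Y_2|Y_1) − H(Y_2|X_1)`. -/
noncomputable def CL (μ : X → ℝ) (P : X → X → ℝ) (W : X → Y → ℝ) : ℝ :=
  HY2gY1 μ P W - HY2gX1 μ P W

/-- The predictability cost `C_P(X, W) = I(X_1;X_2) − I(Y_1;Y_2)`. -/
noncomputable def CP (μ : X → ℝ) (P : X → X → ℝ) (W : X → Y → ℝ) : ℝ :=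
  IX1X2 μ P - IY1Y2 μ P W

/-- The aggregation cost `C_β(X, W) = (1−2β)·C_L(X,W) + β·C_P(X,W)`. -/
noncomputable def Cbeta (μ : X → ℝ) (P : X → X → ℝ) (W : X → Y → ℝ) (β : ℝ) : ℝ :=
  (1 - 2 * β) * CL μ P W + β * CP μ P W

/-- `δ_β(X,W) = (1−β)·(H(Y_2|Y_1) − H̄(Y)) + β·(I(X_1;X_2) − H(Y_1) + H̄(Y))`, where `hbarY`
denotes the entropy rate `H̄(Y)`. -/
noncomputable def deltaBeta (μ : X → ℝ) (P : X → X → ℝ) (W : X → Y → ℝ)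
    (hbarY β : ℝ) : ℝ :=
  (1 - β) * (HY2gY1 μ P W - hbarY) + β * (IX1X2 μ P - ent (nuDist μ W) + hbarY)

/-- Conditional mutual information
`I(X_1; X_2 | Y_2) = H(X_1,Y_2) + H(X_2,Y_2) − H(X_1,X_2,Y_2) − H(Y_2)`. -/
noncomputable def IX1X2gY2 (μ : X → ℝ) (P : X → X → ℝ) (W : X → Y → ℝ) : ℝ :=
  ent (jointX1Y2 μ P W) + ent (jointX2Y2 μ P W) - ent (jointX1X2Y2 μ P W) -
    ent (nuDist μ W)

/-- Conditional mutual information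
`I(X_2; X_1 | Y_1) = H(X_1,Y_1) + H(X_2,Y_1) − H(X_1,X_2,Y_1) − H(Y_1)`. -/
noncomputable def IX2X1gY1 (μ : X → ℝ) (P : X → X → ℝ) (W : X → Y → ℝ) : ℝ :=
  ent (jointX1Y1 μ W) + ent (jointX2Y1 μ P W) - ent (jointX1X2Y1 μ P W) -
    ent (nuDist μ W)

/-- Conditional mutual information
`I(Y_2; X_1 | Y_1) = H(X_1,Y_1) + H(Y_1,Y_2) − H(X_1,Y_1,Y_2) − H(Y_1)`. -/
noncomputable def IY2X1gY1 (μ : X → ℝ) (P : X → X → ℝ) (W : X → Y → ℝ) : ℝ :=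
  ent (jointX1Y1 μ W) + ent (jointYY μ P W) - ent (jointX1Y1Y2 μ P W) -
    ent (nuDist μ W)

/-- Mutual information `I(X_2; Y_1) = H(X_2) + H(Y_1) − H(X_2, Y_1)`. -/
noncomputable def IX2Y1 (μ : X → ℝ) (P : X → X → ℝ) (W : X → Y → ℝ) : ℝ :=
  ent μ + ent (nuDist μ W) - ent (jointX2Y1 μ P W)

/-- The deterministic channel induced by an aggregation function `g : X → Y`:
`W_{x→y} = 1` iff `y = g x`. -/
noncomputable def detW [DecidableEq Y] (g : X → Y) : X → Y → ℝ :=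
  fun x y => if g x = y then 1 else 0

/-- The row-stochastic matrix `R = P·W` for a deterministic aggregation `g`:
`R_{x→y} = ∑_{x' : g x' = y} P_{x→x'}`. -/
noncomputable def Rmat [DecidableEq Y] (P : X → X → ℝ) (g : X → Y) : X → Y → ℝ :=
  fun x y => ∑ x', if g x' = y then P x x' else 0

/-- Kullback–Leibler divergence (base 2) between two probability mass functions on `Y`. -/
noncomputable def klDiv2 (p q : Y → ℝ) : ℝ :=
  ∑ y, p y * Real.logb 2 (p y / q y)

end Defs


/-!
Write `h n = H(Y_{n+2} | Y_1, …, Y_{n+1})` for the entropy increments converging to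
`H̄(Y)`. Conditioning reduces entropy (strong subadditivity), so by stationarity
`h n ≤ H(Y_{n+2} | Y_{n+1}) = H(Y_2 | Y_1)`; and since `Y_{n+2}` depends on
`(Y_1, …, Y_{n+1}, X_{n+1})` only through `X_{n+1}`,
`h n ≥ H(Y_{n+2} | X_{n+1}) = H(Y_2 | X_1)`.
Hence `H(Y_2|X_1) ≤ H̄(Y) ≤ H(Y_2|Y_1)`, and the claim follows from the identities
`δ_β − C_β = (2β − 1)(H̄(Y) − H(Y_2|X_1))` and
`β C_P − δ_β = (2β − 1)(H(Y_2|Y_1) − H̄(Y))`.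
-/

open Finset

section Entropy

variable {A B C : Type} [Fintype A] [Fintype B] [Fintype C]

lemma ent_eq_sum_negMulLog (q : A → ℝ) : ent q = (∑ a, negMulLog (q a)) / log 2 := by
  simp only [ent, sum_div, ← sum_neg_distrib, negMulLog, logb]
  exact sum_congr rfl fun a _ => by ring

lemma ent_congr_equiv (e : A ≃ B) {p : A → ℝ} {q : B → ℝ} (h : ∀ a, p a = q (e a)) :
    ent p = ent q := by
  simp only [ent, h, e.sum_comp (fun b => q b * logb 2 (q b))]

lemma ent_mul_kernel (f : A → ℝ) (r : A → B → ℝ) (hr : ∀ a, ∑ b, r a b = 1) :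
    ent (fun w : A × B => f w.1 * r w.1 w.2) = ent f + ∑ a, f a * ent (r a) := by
  simp only [ent_eq_sum_negMulLog, Fintype.sum_prod_type, negMulLog_mul, sum_add_distrib,
    ← sum_mul, ← mul_sum, hr, one_mul, mul_div_assoc, add_div, sum_div]

lemma mul_log_sub_mul_log_le {p q : ℝ} (hp : 0 ≤ p) (hq : 0 ≤ q) (hpq : 0 < p → 0 < q) :
    p * log q - p * log p ≤ q - p := by
  rcases hp.eq_or_lt with rfl | hp
  · simpa using hq
  have hq := hpq hp
  calc p * log q - p * log p = p * log (q / p) := by rw [log_div hq.ne' hp.ne']; ring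
    _ ≤ p * (q / p - 1) := by gcongr; exact log_le_sub_one_of_pos (div_pos hq hp)
    _ = q - p := by field_simp

lemma sum_mul_log_le_sum_mul_log {p q : A → ℝ} (hp : ∀ a, 0 ≤ p a) (hq : ∀ a, 0 ≤ q a)
    (hpq : ∀ a, 0 < p a → 0 < q a) (hsum : ∑ a, q a = ∑ a, p a) :
    ∑ a, p a * log (q a) ≤ ∑ a, p a * log (p a) := by
  have := sum_le_sum fun a (_ : a ∈ univ) => mul_log_sub_mul_log_le (hp a) (hq a) (hpq a)
  rw [sum_sub_distrib, sum_sub_distrib, hsum, sub_self] at this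
  linarith

lemma sum_marginal_mul_marginal_div_marginal (p : A × B × C → ℝ) :
    ∑ z : A × B × C, (∑ b, p (z.1, b, z.2.2)) * (∑ a, p (a, z.2.1, z.2.2)) /
      (∑ a, ∑ b, p (a, b, z.2.2)) = ∑ z, p z := by
  calc _ = ∑ c, ∑ a, ∑ b,
        (∑ b, p (a, b, c)) * (∑ a, p (a, b, c)) / ∑ a, ∑ b, p (a, b, c) := by
        simp only [Fintype.sum_prod_type]
        rw [sum_comm_cycle]
    _ = ∑ c, (∑ a, ∑ b, p (a, b, c)) * (∑ a, ∑ b, p (a, b, c)) /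
        ∑ a, ∑ b, p (a, b, c) := by
        simp only [← sum_div, ← mul_sum, ← sum_mul]
        exact sum_congr rfl fun c _ => by rw [sum_comm (s := univ (α := B))]
    _ = ∑ z, p z := by
        -- `x * x / x = x` also at `x = 0`, so no positivity is needed
        simp only [mul_self_div_self, Fintype.sum_prod_type]
        rw [← sum_comm_cycle]

lemma sum_mul_log_marginal_add_le (p : A × B × C → ℝ) (hp : ∀ z, 0 ≤ p z) :
    ∑ z, p z * log (∑ b, p (z.1, b, z.2.2)) + ∑ z, p z * log (∑ a, p (a, z.2.1, z.2.2)) ≤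
      ∑ z, p z * log (p z) + ∑ z, p z * log (∑ a, ∑ b, p (a, b, z.2.2)) := by
  set pAC : A → C → ℝ := fun a c => ∑ b, p (a, b, c)
  set pBC : B → C → ℝ := fun b c => ∑ a, p (a, b, c)
  set pC : C → ℝ := fun c => ∑ a, pAC a c
  have hAC : ∀ a b c, p (a, b, c) ≤ pAC a c := fun a b c =>
    single_le_sum (fun b _ => hp (a, b, c)) (mem_univ b)
  have hBC : ∀ a b c, p (a, b, c) ≤ pBC b c := fun a b c =>
    single_le_sum (fun a _ => hp (a, b, c)) (mem_univ a)
  have hC : ∀ a c, pAC a c ≤ pC c := fun a c =>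
    single_le_sum (fun a _ => sum_nonneg fun b _ => hp (a, b, c)) (mem_univ a)
  -- the law under which `A` and `B` are conditionally independent given `C`;
  -- Gibbs' inequality against it is `I(A; B | C) ≥ 0`
  set q : A × B × C → ℝ := fun z => pAC z.1 z.2.2 * pBC z.2.1 z.2.2 / pC z.2.2
  have hq : ∀ z, 0 ≤ q z := fun ⟨a, b, c⟩ =>
    div_nonneg (mul_nonneg ((hp _).trans (hAC a b c)) ((hp _).trans (hBC a b c)))
      (((hp _).trans (hAC a b c)).trans (hC a c))
  have hpq : ∀ z, 0 < p z → 0 < q z := fun ⟨a, b, c⟩ hpz =>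
    div_pos (mul_pos (hpz.trans_le (hAC a b c)) (hpz.trans_le (hBC a b c)))
      ((hpz.trans_le (hAC a b c)).trans_le (hC a c))
  have hlog_q : ∀ z, p z * log (q z) =
      p z * log (pAC z.1 z.2.2) + p z * log (pBC z.2.1 z.2.2) - p z * log (pC z.2.2) := by
    rintro ⟨a, b, c⟩
    rcases (hp (a, b, c)).eq_or_lt with h0 | hpz
    · simp [← h0]
    have hpAC := hpz.trans_le (hAC a b c)
    have hpBC := hpz.trans_le (hBC a b c)
    show _ * log (pAC a c * pBC b c / pC c) = _
    rw [log_div (mul_pos hpAC hpBC).ne' (hpAC.trans_le (hC a c)).ne',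
      log_mul hpAC.ne' hpBC.ne']
    ring
  have hgibbs := sum_mul_log_le_sum_mul_log hp hq hpq
    (sum_marginal_mul_marginal_div_marginal p)
  rw [sum_congr rfl fun z _ => hlog_q z, sum_sub_distrib, sum_add_distrib] at hgibbs
  linarith

lemma ent_triple_add_ent_le (p : A × B × C → ℝ) (hp : ∀ z, 0 ≤ p z) :
    ent p + ent (fun c => ∑ a, ∑ b, p (a, b, c)) ≤
      ent (fun ac : A × C => ∑ b, p (ac.1, b, ac.2)) +
        ent (fun bc : B × C => ∑ a, p (a, bc.1, bc.2)) := by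
  have eAC : ∑ ac : A × C, negMulLog (∑ b, p (ac.1, b, ac.2)) =
      -∑ z, p z * log (∑ b, p (z.1, b, z.2.2)) := by
    simp only [negMulLog, Fintype.sum_prod_type, neg_mul, sum_neg_distrib, sum_mul]
    exact congrArg _ (sum_congr rfl fun _ _ => sum_comm)
  have eBC : ∑ bc : B × C, negMulLog (∑ a, p (a, bc.1, bc.2)) =
      -∑ z, p z * log (∑ a, p (a, z.2.1, z.2.2)) := by
    simp only [negMulLog, Fintype.sum_prod_type, neg_mul, sum_neg_distrib, sum_mul]
    exact congrArg _ sum_comm_cycle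
  have eC : ∑ c, negMulLog (∑ a, ∑ b, p (a, b, c)) =
      -∑ z, p z * log (∑ a, ∑ b, p (a, b, z.2.2)) := by
    simp only [negMulLog, Fintype.sum_prod_type, neg_mul, sum_neg_distrib, sum_mul]
    exact congrArg _ sum_comm_cycle.symm
  simp only [ent_eq_sum_negMulLog, ← add_div]
  refine div_le_div_of_nonneg_right ?_ (log_nonneg one_le_two)
  rw [eAC, eBC, eC]
  simp only [negMulLog, neg_mul, sum_neg_distrib]
  linarith [sum_mul_log_marginal_add_le p hp]

end Entropy

lemma Fin.sum_sum_snoc {Z M : Type} [Fintype Z] [AddCommMonoid M] {n : ℕ}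
    (f : (Fin (n + 1) → Z) → M) :
    ∑ z, ∑ r : Fin n → Z, f (Fin.snoc r z) = ∑ q, f q := by
  rw [← Fintype.sum_prod_type']
  exact Fintype.sum_equiv (Fin.snocEquiv fun _ => Z) _ _ fun _ => rfl

lemma Fin.prod_snoc_snoc {Z Z' : Type} {n : ℕ} (f : Z → Z' → ℝ) (q : Fin n → Z) (x : Z)
    (d : Fin n → Z') (a : Z') :
    ∏ i, f ((Fin.snoc q x : Fin (n + 1) → Z) i) ((Fin.snoc d a : Fin (n + 1) → Z') i) =
      (∏ i, f (q i) (d i)) * f x a := by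
  simp [Fin.prod_univ_castSucc]

section HiddenMarkov

variable {X Y : Type} (μ : X → ℝ) (P : X → X → ℝ) (W : X → Y → ℝ)

lemma chainJoint_snoc {n : ℕ} (q : Fin (n + 1) → X) (x : X) :
    chainJoint μ P (n + 1) (Fin.snoc q x) = chainJoint μ P n q * P (q (Fin.last n)) x := by
  simp only [chainJoint, Fin.prod_univ_castSucc, Fin.succ_castSucc, Fin.snoc_castSucc,
    Fin.succ_last, Fin.snoc_last]
  rw [show (Fin.snoc q x : Fin (n + 2) → X) 0 = q 0 from Fin.snoc_castSucc (i := 0) ..]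
  ring

lemma chainJoint_nonneg (hμ0 : ∀ x, 0 ≤ μ x) (hP0 : ∀ x x', 0 ≤ P x x') {n : ℕ}
    (q : Fin (n + 1) → X) : 0 ≤ chainJoint μ P n q :=
  mul_nonneg (hμ0 _) (prod_nonneg fun _ _ => hP0 _ _)

variable [Fintype X]

/-- The probability that `(Y_1, …, Y_{n+1}) = d` and `X_{n+1} = x`. -/
noncomputable def forwardJoint (n : ℕ) (d : Fin (n + 1) → Y) (x : X) : ℝ :=
  ∑ q : Fin n → X, chainJoint μ P n (Fin.snoc q x) *
    ∏ i, W ((Fin.snoc q x : Fin (n + 1) → X) i) (d i)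

/-- The law of `Y_{k+1}` given `X_k = x`. -/
noncomputable def obsKernel (x : X) (y : Y) : ℝ := ∑ x', P x x' * W x' y

lemma sum_forwardJoint (n : ℕ) (d : Fin (n + 1) → Y) :
    ∑ x, forwardJoint μ P W n d x = obsJoint μ P W n d :=
  Fin.sum_sum_snoc fun q => chainJoint μ P n q * ∏ i, W (q i) (d i)

lemma forwardJoint_zero (d : Fin 1 → Y) (x : X) :
    forwardJoint μ P W 0 d x = μ x * W x (d 0) := by
  simp [forwardJoint, chainJoint, Fin.snoc]

lemma forwardJoint_snoc (n : ℕ) (d : Fin (n + 1) → Y) (a : Y) (x' : X) :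
    forwardJoint μ P W (n + 1) (Fin.snoc d a) x' =
      (∑ x, forwardJoint μ P W n d x * P x x') * W x' a := by
  simp only [forwardJoint, chainJoint_snoc, Fin.prod_snoc_snoc, sum_mul]
  rw [← Fin.sum_sum_snoc]
  refine sum_congr rfl fun x _ => sum_congr rfl fun r _ => ?_
  rw [Fin.snoc_last]
  ring

lemma obsJoint_snoc (n : ℕ) (d : Fin (n + 1) → Y) (a : Y) :
    obsJoint μ P W (n + 1) (Fin.snoc d a) =
      ∑ x, forwardJoint μ P W n d x * obsKernel P W x a := by
  simp only [← sum_forwardJoint, forwardJoint_snoc, obsKernel, mul_sum, sum_mul]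
  rw [sum_comm]
  exact sum_congr rfl fun _ _ => sum_congr rfl fun _ _ => by ring

lemma forwardJoint_nonneg (hμ0 : ∀ x, 0 ≤ μ x) (hP0 : ∀ x x', 0 ≤ P x x')
    (hW0 : ∀ x y, 0 ≤ W x y) (n : ℕ) (d : Fin (n + 1) → Y) (x : X) :
    0 ≤ forwardJoint μ P W n d x :=
  sum_nonneg fun _ _ =>
    mul_nonneg (chainJoint_nonneg μ P hμ0 hP0 _) (prod_nonneg fun _ _ => hW0 _ _)

lemma obsJoint_nonneg (hμ0 : ∀ x, 0 ≤ μ x) (hP0 : ∀ x x', 0 ≤ P x x')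
    (hW0 : ∀ x y, 0 ≤ W x y) (n : ℕ) (d : Fin (n + 1) → Y) : 0 ≤ obsJoint μ P W n d :=
  sum_forwardJoint μ P W n d ▸
    sum_nonneg fun _ _ => forwardJoint_nonneg μ P W hμ0 hP0 hW0 _ _ _

lemma obsKernel_nonneg (hP0 : ∀ x x', 0 ≤ P x x') (hW0 : ∀ x y, 0 ≤ W x y) (x : X) (y : Y) :
    0 ≤ obsKernel P W x y :=
  sum_nonneg fun _ _ => mul_nonneg (hP0 _ _) (hW0 _ _)

lemma jointYY_eq (c a : Y) : jointYY μ P W (c, a) = ∑ x, μ x * W x c * obsKernel P W x a := by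
  simp [jointYY, obsKernel, mul_sum, mul_assoc]

lemma jointX1Y2_eq : jointX1Y2 μ P W = fun w => μ w.1 * obsKernel P W w.1 w.2 := by
  funext w
  simp [jointX1Y2, obsKernel, mul_sum, mul_assoc]

variable [Fintype Y]

lemma sum_obsKernel (hP1 : ∀ x, ∑ x', P x x' = 1) (hW1 : ∀ x, ∑ y, W x y = 1) (x : X) :
    ∑ y, obsKernel P W x y = 1 := by
  simp only [obsKernel]
  rw [sum_comm]
  simp [← mul_sum, hW1, hP1]

lemma sum_forwardJoint_obs (hinv : ∀ x', ∑ x, μ x * P x x' = μ x')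
    (hW1 : ∀ x, ∑ y, W x y = 1) (n : ℕ) (x : X) :
    ∑ d, forwardJoint μ P W n d x = μ x := by
  induction n generalizing x with
  | zero => simp [← Fin.sum_sum_snoc, forwardJoint_zero, Fin.snoc_zero, ← mul_sum, hW1]
  | succ n ih =>
    calc ∑ d, forwardJoint μ P W (n + 1) d x
        = ∑ a, (∑ x₀, (∑ d, forwardJoint μ P W n d x₀) * P x₀ x) * W x a := by
          rw [← Fin.sum_sum_snoc (fun d => forwardJoint μ P W (n + 1) d x)]
          simp only [forwardJoint_snoc, ← sum_mul]
          exact sum_congr rfl fun a _ => by rw [sum_comm]; simp only [sum_mul]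
      _ = μ x := by simp only [ih, hinv, ← mul_sum, hW1, mul_one]

lemma sum_forwardJoint_snoc (hinv : ∀ x', ∑ x, μ x * P x x' = μ x')
    (hW1 : ∀ x, ∑ y, W x y = 1) (n : ℕ) (c : Y) (x : X) :
    ∑ b : Fin n → Y, forwardJoint μ P W n (Fin.snoc b c) x = μ x * W x c := by
  cases n with
  | zero => simp [forwardJoint_zero, Fin.snoc_zero]
  | succ n => simp only [forwardJoint_snoc, ← sum_mul, sum_comm (γ := Fin (n + 1) → Y),
      sum_forwardJoint_obs μ P W hinv hW1, hinv]

lemma sum_obsJoint_snoc (hP1 : ∀ x, ∑ x', P x x' = 1) (hW1 : ∀ x, ∑ y, W x y = 1) (n : ℕ)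
    (d : Fin (n + 1) → Y) :
    ∑ a, obsJoint μ P W (n + 1) (Fin.snoc d a) = obsJoint μ P W n d := by
  simp only [obsJoint_snoc]
  rw [sum_comm]
  simp [← mul_sum, sum_obsKernel P W hP1 hW1, sum_forwardJoint]

lemma sum_obsJoint_snoc_snoc (hinv : ∀ x', ∑ x, μ x * P x x' = μ x')
    (hW1 : ∀ x, ∑ y, W x y = 1) (n : ℕ) (c a : Y) :
    ∑ b : Fin n → Y, obsJoint μ P W (n + 1) (Fin.snoc (Fin.snoc b c) a) =
      jointYY μ P W (c, a) := by
  simp only [obsJoint_snoc, jointYY_eq]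
  rw [sum_comm]
  simp only [← sum_mul, sum_forwardJoint_snoc μ P W hinv hW1]

lemma sum_jointYY (hP1 : ∀ x, ∑ x', P x x' = 1) (hW1 : ∀ x, ∑ y, W x y = 1) (c : Y) :
    ∑ a, jointYY μ P W (c, a) = nuDist μ W c := by
  simp only [jointYY_eq, nuDist]
  rw [sum_comm]
  simp [← mul_sum, sum_obsKernel P W hP1 hW1]

lemma HY2gX1_eq (hP1 : ∀ x, ∑ x', P x x' = 1) (hW1 : ∀ x, ∑ y, W x y = 1) :
    HY2gX1 μ P W = ∑ x, μ x * ent (obsKernel P W x) := by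
  rw [HY2gX1, jointX1Y2_eq, ent_mul_kernel _ _ (sum_obsKernel P W hP1 hW1)]
  ring

end HiddenMarkov

section EntropyRate

variable {X Y : Type} [Fintype X] [Fintype Y]
  {μ : X → ℝ} {P : X → X → ℝ} {W : X → Y → ℝ}

lemma ent_obsJoint_succ_sub_le_HY2gY1 (hμ0 : ∀ x, 0 ≤ μ x) (hP0 : ∀ x x', 0 ≤ P x x')
    (hP1 : ∀ x, ∑ x', P x x' = 1) (hinv : ∀ x', ∑ x, μ x * P x x' = μ x')
    (hW0 : ∀ x y, 0 ≤ W x y) (hW1 : ∀ x, ∑ y, W x y = 1) (n : ℕ) :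
    ent (obsJoint μ P W (n + 1)) - ent (obsJoint μ P W n) ≤ HY2gY1 μ P W := by
  let p : Y × (Fin n → Y) × Y → ℝ := fun z =>
    obsJoint μ P W (n + 1) (Fin.snoc (Fin.snoc z.2.1 z.2.2) z.1)
  have h := ent_triple_add_ent_le p fun _ => obsJoint_nonneg μ P W hμ0 hP0 hW0 _ _
  have e₁ : ent p = ent (obsJoint μ P W (n + 1)) := ent_congr_equiv
    ((Equiv.prodCongr (Equiv.refl Y)
      ((Equiv.prodComm _ _).trans (Fin.snocEquiv fun _ => Y))).trans
      (Fin.snocEquiv fun _ => Y)) fun _ => rfl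
  have e₂ : ent (fun ac : Y × Y => ∑ b, p (ac.1, b, ac.2)) = ent (jointYY μ P W) :=
    ent_congr_equiv (Equiv.prodComm Y Y) fun _ => sum_obsJoint_snoc_snoc μ P W hinv hW1 n _ _
  have e₃ : ent (fun bc : (Fin n → Y) × Y => ∑ a, p (a, bc.1, bc.2)) =
      ent (obsJoint μ P W n) :=
    ent_congr_equiv ((Equiv.prodComm _ _).trans (Fin.snocEquiv fun _ => Y)) fun bc =>
      sum_obsJoint_snoc μ P W hP1 hW1 n (Fin.snoc bc.1 bc.2)
  have e₄ : (fun c => ∑ a, ∑ b, p (a, b, c)) = nuDist μ W := funext fun c => by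
    simp only [p, sum_obsJoint_snoc_snoc μ P W hinv hW1, sum_jointYY μ P W hP1 hW1]
  rw [e₁, e₂, e₃, e₄] at h
  rw [HY2gY1]
  linarith

lemma HY2gX1_le_ent_obsJoint_succ_sub (hμ0 : ∀ x, 0 ≤ μ x) (hP0 : ∀ x x', 0 ≤ P x x')
    (hP1 : ∀ x, ∑ x', P x x' = 1) (hinv : ∀ x', ∑ x, μ x * P x x' = μ x')
    (hW0 : ∀ x y, 0 ≤ W x y) (hW1 : ∀ x, ∑ y, W x y = 1) (n : ℕ) :
    HY2gX1 μ P W ≤ ent (obsJoint μ P W (n + 1)) - ent (obsJoint μ P W n) := by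
  let p : Y × X × (Fin (n + 1) → Y) → ℝ := fun z =>
    forwardJoint μ P W n z.2.2 z.2.1 * obsKernel P W z.2.1 z.1
  have h := ent_triple_add_ent_le p fun _ =>
    mul_nonneg (forwardJoint_nonneg μ P W hμ0 hP0 hW0 _ _ _) (obsKernel_nonneg P W hP0 hW0 _ _)
  let g : X × (Fin (n + 1) → Y) → ℝ := fun u => forwardJoint μ P W n u.2 u.1
  have e₁ : ent p = ent g + HY2gX1 μ P W := by
    calc ent p = ent fun w : (X × (Fin (n + 1) → Y)) × Y => g w.1 * obsKernel P W w.1.1 w.2 :=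
          ent_congr_equiv (Equiv.prodComm _ _) fun _ => rfl
      _ = ent g + ∑ u, g u * ent (obsKernel P W u.1) :=
          ent_mul_kernel g (fun u => obsKernel P W u.1) fun u => sum_obsKernel P W hP1 hW1 u.1
      _ = ent g + HY2gX1 μ P W := by
          simp only [g, HY2gX1_eq μ P W hP1 hW1, Fintype.sum_prod_type, ← sum_mul,
            sum_forwardJoint_obs μ P W hinv hW1]
  have e₂ : ent (fun ad : Y × (Fin (n + 1) → Y) => ∑ x, p (ad.1, x, ad.2)) =
      ent (obsJoint μ P W (n + 1)) :=
    ent_congr_equiv (Fin.snocEquiv fun _ => Y) fun ad => (obsJoint_snoc μ P W n ad.2 ad.1).symm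
  have e₃ : (fun xd : X × (Fin (n + 1) → Y) => ∑ a, p (a, xd.1, xd.2)) = g :=
    funext fun xd => by simp only [p, g, ← mul_sum, sum_obsKernel P W hP1 hW1, mul_one]
  have e₄ : (fun d => ∑ a, ∑ x, p (a, x, d)) = obsJoint μ P W n := funext fun d => by
    simp only [p, ← obsJoint_snoc, sum_obsJoint_snoc μ P W hP1 hW1]
  rw [e₁, e₂, e₃, e₄] at h
  linarith

end EntropyRate

section Costs

variable {X Y : Type} [Fintype X] [Fintype Y]
  (μ : X → ℝ) (P : X → X → ℝ) (W : X → Y → ℝ) (hbar β : ℝ)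

lemma deltaBeta_sub_Cbeta :
    deltaBeta μ P W hbar β - Cbeta μ P W β = (2 * β - 1) * (hbar - HY2gX1 μ P W) := by
  simp only [deltaBeta, Cbeta, CL, CP, IY1Y2, HY2gY1]
  ring

lemma mul_CP_sub_deltaBeta :
    β * CP μ P W - deltaBeta μ P W hbar β = (2 * β - 1) * (HY2gY1 μ P W - hbar) := by
  simp only [deltaBeta, CP, IY1Y2, HY2gY1]
  ring

end Costs

theorem delta_between_above_half_general
    {X Y : Type} [Fintype X] [Fintype Y]
    (μ : X → ℝ) (P : X → X → ℝ) (W : X → Y → ℝ)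
    (hμ0 : ∀ x, 0 ≤ μ x)
    (hP0 : ∀ x x', 0 ≤ P x x') (hP1 : ∀ x, ∑ x', P x x' = 1)
    (hinv : ∀ x', ∑ x, μ x * P x x' = μ x')
    (hW0 : ∀ x y, 0 ≤ W x y) (hW1 : ∀ x, ∑ y, W x y = 1)
    (hbarY : ℝ)
    (hlim : Filter.Tendsto (fun n => ent (obsJoint μ P W (n + 1)) - ent (obsJoint μ P W n))
      Filter.atTop (nhds hbarY)) :
    ∀ β : ℝ, 1 / 2 ≤ β → β ≤ 1 →
      Cbeta μ P W β ≤ deltaBeta μ P W hbarY β ∧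
      deltaBeta μ P W hbarY β ≤ β * CP μ P W := by
  intro β hβ _
  have hupper : hbarY ≤ HY2gY1 μ P W :=
    le_of_tendsto' hlim (ent_obsJoint_succ_sub_le_HY2gY1 hμ0 hP0 hP1 hinv hW0 hW1)
  have hlower : HY2gX1 μ P W ≤ hbarY :=
    ge_of_tendsto' hlim (HY2gX1_le_ent_obsJoint_succ_sub hμ0 hP0 hP1 hinv hW0 hW1)
  have h2β : 0 ≤ 2 * β - 1 := by linarith
  constructor
  · linarith [deltaBeta_sub_Cbeta μ P W hbarY β, mul_nonneg h2β (sub_nonneg.2 hlower)]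
  · linarith [mul_CP_sub_deltaBeta μ P W hbarY β, mul_nonneg h2β (sub_nonneg.2 hupper)]

/-- For every `β` with `1/2 ≤ β ≤ 1`:
`C_β(X,W) ≤ δ_β(X,W) ≤ β·C_P(X,W)`. -/
theorem delta_between_above_half
    {X Y : Type} [Fintype X] [Fintype Y] [Nonempty X] [Nonempty Y] [DecidableEq X]
    (μ : X → ℝ) (P : X → X → ℝ) (W : X → Y → ℝ)
    (hμ0 : ∀ x, 0 ≤ μ x) (hμ1 : ∑ x, μ x = 1)
    (hP0 : ∀ x x', 0 ≤ P x x') (hP1 : ∀ x, ∑ x', P x x' = 1)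
    (hinv : ∀ x', ∑ x, μ x * P x x' = μ x')
    (hirr : IrreducibleAperiodic (Matrix.of fun a b => P a b))
    (hW0 : ∀ x y, 0 ≤ W x y) (hW1 : ∀ x, ∑ y, W x y = 1)
    (hbarY : ℝ)
    (hlim : Filter.Tendsto (fun n => ent (obsJoint μ P W (n + 1)) - ent (obsJoint μ P W n))
      Filter.atTop (nhds hbarY)) :
    ∀ β : ℝ, 1 / 2 ≤ β → β ≤ 1 →
      Cbeta μ P W β ≤ deltaBeta μ P W hbarY β ∧
      deltaBeta μ P W hbarY β ≤ β * CP μ P W :=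
  delta_between_above_half_general μ P W hμ0 hP0 hP1 hinv hW0 hW1 hbarY hlim
end

section
/- If the Markov chain X is reversible, i.e., μ_x P_{x→x'} = μ_{x'} P_{x'→x} for all x, x' ∈ 𝒳, then the function β ↦ C_β(X,W) is non-decreasing on [0,1]: for all 0 ≤ β ≤ β' ≤ 1, C_β(X,W) ≤ C_{β'}(X,W). -/
open Filter Real

namespace CbetaAux

open Finset

lemma mul_log_mul (x y : ℝ) (hx : 0 ≤ x) (hy : 0 ≤ y) :
    (x * y) * Real.log (x * y) = y * (x * Real.log x) + x * (y * Real.log y) := by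
  rcases hx.eq_or_lt with h | h
  · simp [← h]
  rcases hy.eq_or_lt with h' | h'
  · simp [← h']
  rw [Real.log_mul h.ne' h'.ne']; ring

lemma gibbs {Z : Type} [Fintype Z] (p r : Z → ℝ)
    (hp : ∀ z, 0 ≤ p z) (hr : ∀ z, 0 ≤ r z) (hpr : ∀ z, 0 < p z → 0 < r z)
    (hsum : ∑ z, r z ≤ ∑ z, p z) :
    ∑ z, p z * Real.log (r z) ≤ ∑ z, p z * Real.log (p z) := by
  have key : ∀ z, p z * Real.log (r z) - p z * Real.log (p z) ≤ r z - p z := by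
    intro z
    rcases (hp z).eq_or_lt with h | h
    · rw [← h]; simpa using hr z
    · have hrz := hpr z h
      have h1 : Real.log (r z / p z) ≤ r z / p z - 1 :=
        Real.log_le_sub_one_of_pos (div_pos hrz h)
      rw [Real.log_div hrz.ne' h.ne'] at h1
      have h2 := mul_le_mul_of_nonneg_left h1 h.le
      have h3 : p z * (r z / p z - 1) = r z - p z := by field_simp
      rw [h3] at h2
      nlinarith [h2]
  have A : ∑ z, (p z * Real.log (r z) - p z * Real.log (p z)) ≤ ∑ z, (r z - p z) :=
    Finset.sum_le_sum fun z _ => key z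
  rw [Finset.sum_sub_distrib, Finset.sum_sub_distrib] at A
  linarith

lemma ent_eq {A : Type} [Fintype A] (f : A → ℝ) :
    ent f = -(∑ a, f a * Real.log (f a)) / Real.log 2 := by
  simp only [ent, Real.logb, neg_div, Finset.sum_div, mul_div_assoc]

/-- `K = P·W`. -/
noncomputable def Kf {X Y : Type} [Fintype X] (P : X → X → ℝ) (W : X → Y → ℝ) :
    X → Y → ℝ := fun x y => ∑ x', P x x' * W x' y

section Core

variable {X Y : Type} [Fintype X] [Fintype Y]

/-- Joint law of `(Y_1,Y_2,X_1,X_2)`, indexed as `((y1,y2),(x1,x2))`. -/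
noncomputable def qf (μ : X → ℝ) (P : X → X → ℝ) (W : X → Y → ℝ) :
    (Y × Y) × X × X → ℝ :=
  fun z => μ z.2.1 * W z.2.1 z.1.1 * P z.2.1 z.2.2 * W z.2.2 z.1.2

noncomputable def af (μ : X → ℝ) (P : X → X → ℝ) (W : X → Y → ℝ) :
    Y × Y → X → ℝ := fun p x => μ x * W x p.1 * Kf P W x p.2

noncomputable def bf (μ : X → ℝ) (P : X → X → ℝ) (W : X → Y → ℝ) :
    Y × Y → X → ℝ := fun p x => μ x * Kf P W x p.1 * W x p.2

variable (μ : X → ℝ) (P : X → X → ℝ) (W : X → Y → ℝ)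

lemma sum_x2 (p : Y × Y) (x1 : X) :
    ∑ x2, qf μ P W (p, x1, x2) = af μ P W p x1 := by
  unfold qf af Kf
  rw [Finset.mul_sum]
  exact Finset.sum_congr rfl fun _ _ => by ring

lemma sum_x1 (hrev : ∀ x x', μ x * P x x' = μ x' * P x' x) (p : Y × Y) (x2 : X) :
    ∑ x1, qf μ P W (p, x1, x2) = bf μ P W p x2 := by
  unfold qf bf Kf
  rw [Finset.mul_sum, Finset.sum_mul]
  refine Finset.sum_congr rfl fun x1 _ => ?_
  linear_combination (W x1 p.1 * W x2 p.2) * hrev x1 x2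

lemma jointYY_eq_sum (p : Y × Y) :
    jointYY μ P W p = ∑ x1, ∑ x2, qf μ P W (p, x1, x2) := rfl

lemma jointX1Y2_eq (p : X × Y) :
    jointX1Y2 μ P W p = μ p.1 * Kf P W p.1 p.2 := by
  unfold jointX1Y2 Kf
  rw [Finset.mul_sum]
  exact Finset.sum_congr rfl fun _ _ => by ring

lemma sum_mul_log_mul {B : Type} [Fintype B] (u : ℝ) (w : B → ℝ)
    (hu : 0 ≤ u) (hw : ∀ b, 0 ≤ w b) (hw1 : ∑ b, w b = 1) :
    ∑ b, (u * w b) * Real.log (u * w b)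
      = u * Real.log u + u * ∑ b, w b * Real.log (w b) := by
  calc ∑ b, (u * w b) * Real.log (u * w b)
      = ∑ b, (w b * (u * Real.log u) + u * (w b * Real.log (w b))) :=
        Finset.sum_congr rfl fun b _ => mul_log_mul u (w b) hu (hw b)
    _ = (∑ b, w b) * (u * Real.log u) + u * ∑ b, w b * Real.log (w b) := by
        rw [Finset.sum_add_distrib, ← Finset.sum_mul, ← Finset.mul_sum]
    _ = u * Real.log u + u * ∑ b, w b * Real.log (w b) := by rw [hw1, one_mul]

lemma Kf_nonneg (hP0 : ∀ x x', 0 ≤ P x x') (hW0 : ∀ x y, 0 ≤ W x y) (x : X) (y : Y) :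
    0 ≤ Kf P W x y :=
  Finset.sum_nonneg fun x' _ => mul_nonneg (hP0 x x') (hW0 x' y)

lemma Kf_sum_one (hP1 : ∀ x, ∑ x', P x x' = 1) (hW1 : ∀ x, ∑ y, W x y = 1) (x : X) :
    ∑ y, Kf P W x y = 1 := by
  unfold Kf
  rw [Finset.sum_comm]
  simp_rw [← Finset.mul_sum]
  simp only [hW1, mul_one]
  exact hP1 x

lemma sum_af_log
    (hμ0 : ∀ x, 0 ≤ μ x)
    (hP0 : ∀ x x', 0 ≤ P x x') (hP1 : ∀ x, ∑ x', P x x' = 1)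
    (hW0 : ∀ x y, 0 ≤ W x y) (hW1 : ∀ x, ∑ y, W x y = 1) :
    ∑ p : Y × Y, ∑ x, af μ P W p x * Real.log (af μ P W p x)
      = (∑ x, ∑ y, (μ x * Kf P W x y) * Real.log (μ x * Kf P W x y))
        + ∑ x, μ x * ∑ y, W x y * Real.log (W x y) := by
  have hK0 := Kf_nonneg P W hP0 hW0
  have hK1 := Kf_sum_one P W hP1 hW1
  have step : ∀ x : X,
      (∑ y2, ∑ y1, af μ P W (y1, y2) x * Real.log (af μ P W (y1, y2) x))
      = (∑ y, (μ x * Kf P W x y) * Real.log (μ x * Kf P W x y))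
          + μ x * ∑ y, W x y * Real.log (W x y) := by
    intro x
    have inner : ∀ y2, (∑ y1, af μ P W (y1, y2) x * Real.log (af μ P W (y1, y2) x))
        = (μ x * Kf P W x y2) * Real.log (μ x * Kf P W x y2)
          + (μ x * Kf P W x y2) * ∑ y1, W x y1 * Real.log (W x y1) := by
      intro y2
      have hform : ∀ y1, af μ P W (y1, y2) x = (μ x * Kf P W x y2) * W x y1 := by
        intro y1; unfold af; ring
      simp_rw [hform]
      exact sum_mul_log_mul _ _ (mul_nonneg (hμ0 x) (hK0 x y2)) (hW0 x) (hW1 x)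
    simp_rw [inner]
    rw [Finset.sum_add_distrib, ← Finset.sum_mul, ← Finset.mul_sum, hK1 x, mul_one]
  calc ∑ p : Y × Y, ∑ x, af μ P W p x * Real.log (af μ P W p x)
      = ∑ y1, ∑ y2, ∑ x, af μ P W (y1, y2) x * Real.log (af μ P W (y1, y2) x) := by
        rw [Fintype.sum_prod_type]
    _ = ∑ y1, ∑ x, ∑ y2, af μ P W (y1, y2) x * Real.log (af μ P W (y1, y2) x) :=
        Finset.sum_congr rfl fun _ _ => Finset.sum_comm
    _ = ∑ x, ∑ y1, ∑ y2, af μ P W (y1, y2) x * Real.log (af μ P W (y1, y2) x) :=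
        Finset.sum_comm
    _ = ∑ x, ∑ y2, ∑ y1, af μ P W (y1, y2) x * Real.log (af μ P W (y1, y2) x) :=
        Finset.sum_congr rfl fun _ _ => Finset.sum_comm
    _ = ∑ x, ((∑ y, (μ x * Kf P W x y) * Real.log (μ x * Kf P W x y))
          + μ x * ∑ y, W x y * Real.log (W x y)) :=
        Finset.sum_congr rfl fun x _ => step x
    _ = _ := Finset.sum_add_distrib

lemma sum_bf_log
    (hμ0 : ∀ x, 0 ≤ μ x)
    (hP0 : ∀ x x', 0 ≤ P x x') (hP1 : ∀ x, ∑ x', P x x' = 1)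
    (hW0 : ∀ x y, 0 ≤ W x y) (hW1 : ∀ x, ∑ y, W x y = 1) :
    ∑ p : Y × Y, ∑ x, bf μ P W p x * Real.log (bf μ P W p x)
      = (∑ x, ∑ y, (μ x * Kf P W x y) * Real.log (μ x * Kf P W x y))
        + ∑ x, μ x * ∑ y, W x y * Real.log (W x y) := by
  have hK0 := Kf_nonneg P W hP0 hW0
  have hK1 := Kf_sum_one P W hP1 hW1
  have step : ∀ x : X,
      (∑ y1, ∑ y2, bf μ P W (y1, y2) x * Real.log (bf μ P W (y1, y2) x))
      = (∑ y, (μ x * Kf P W x y) * Real.log (μ x * Kf P W x y))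
          + μ x * ∑ y, W x y * Real.log (W x y) := by
    intro x
    have inner : ∀ y1, (∑ y2, bf μ P W (y1, y2) x * Real.log (bf μ P W (y1, y2) x))
        = (μ x * Kf P W x y1) * Real.log (μ x * Kf P W x y1)
          + (μ x * Kf P W x y1) * ∑ y2, W x y2 * Real.log (W x y2) := by
      intro y1
      have hform : ∀ y2, bf μ P W (y1, y2) x = (μ x * Kf P W x y1) * W x y2 := by
        intro y2; unfold bf; ring
      simp_rw [hform]
      exact sum_mul_log_mul _ _ (mul_nonneg (hμ0 x) (hK0 x y1)) (hW0 x) (hW1 x)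
    simp_rw [inner]
    rw [Finset.sum_add_distrib, ← Finset.sum_mul, ← Finset.mul_sum, hK1 x, mul_one]
  calc ∑ p : Y × Y, ∑ x, bf μ P W p x * Real.log (bf μ P W p x)
      = ∑ y1, ∑ y2, ∑ x, bf μ P W (y1, y2) x * Real.log (bf μ P W (y1, y2) x) := by
        rw [Fintype.sum_prod_type]
    _ = ∑ y1, ∑ x, ∑ y2, bf μ P W (y1, y2) x * Real.log (bf μ P W (y1, y2) x) :=
        Finset.sum_congr rfl fun _ _ => Finset.sum_comm
    _ = ∑ x, ∑ y1, ∑ y2, bf μ P W (y1, y2) x * Real.log (bf μ P W (y1, y2) x) :=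
        Finset.sum_comm
    _ = ∑ x, ((∑ y, (μ x * Kf P W x y) * Real.log (μ x * Kf P W x y))
          + μ x * ∑ y, W x y * Real.log (W x y)) :=
        Finset.sum_congr rfl fun x _ => step x
    _ = _ := Finset.sum_add_distrib

lemma sum_qf_log
    (hμ0 : ∀ x, 0 ≤ μ x)
    (hP0 : ∀ x x', 0 ≤ P x x') (hP1 : ∀ x, ∑ x', P x x' = 1)
    (hinv : ∀ x', ∑ x, μ x * P x x' = μ x')
    (hW0 : ∀ x y, 0 ≤ W x y) (hW1 : ∀ x, ∑ y, W x y = 1) :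
    ∑ z : (Y × Y) × X × X, qf μ P W z * Real.log (qf μ P W z)
      = (∑ p : X × X, jointXX μ P p * Real.log (jointXX μ P p))
        + 2 * ∑ x, μ x * ∑ y, W x y * Real.log (W x y) := by
  have step : ∀ x1 x2 : X,
      (∑ y1, ∑ y2, qf μ P W ((y1, y2), x1, x2) * Real.log (qf μ P W ((y1, y2), x1, x2)))
      = (μ x1 * P x1 x2) * Real.log (μ x1 * P x1 x2)
          + (μ x1 * P x1 x2) * ∑ y, W x1 y * Real.log (W x1 y)
          + (μ x1 * P x1 x2) * ∑ y, W x2 y * Real.log (W x2 y) := by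
    intro x1 x2
    have hv0 : 0 ≤ μ x1 * P x1 x2 := mul_nonneg (hμ0 x1) (hP0 x1 x2)
    have inner : ∀ y1,
        (∑ y2, qf μ P W ((y1, y2), x1, x2) * Real.log (qf μ P W ((y1, y2), x1, x2)))
        = ((μ x1 * P x1 x2) * W x1 y1) * Real.log ((μ x1 * P x1 x2) * W x1 y1)
          + ((μ x1 * P x1 x2) * W x1 y1) * ∑ y, W x2 y * Real.log (W x2 y) := by
      intro y1
      have hform : ∀ y2, qf μ P W ((y1, y2), x1, x2)
          = ((μ x1 * P x1 x2) * W x1 y1) * W x2 y2 := by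
        intro y2; unfold qf; ring
      simp_rw [hform]
      exact sum_mul_log_mul _ _ (mul_nonneg hv0 (hW0 x1 y1)) (hW0 x2) (hW1 x2)
    simp_rw [inner]
    rw [Finset.sum_add_distrib,
      sum_mul_log_mul _ _ hv0 (hW0 x1) (hW1 x1),
      ← Finset.sum_mul, ← Finset.mul_sum, hW1 x1, mul_one]
  calc ∑ z : (Y × Y) × X × X, qf μ P W z * Real.log (qf μ P W z)
      = ∑ p : Y × Y, ∑ w : X × X, qf μ P W (p, w) * Real.log (qf μ P W (p, w)) :=
        Fintype.sum_prod_type _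
    _ = ∑ w : X × X, ∑ p : Y × Y, qf μ P W (p, w) * Real.log (qf μ P W (p, w)) :=
        Finset.sum_comm
    _ = ∑ x1, ∑ x2, ∑ y1, ∑ y2,
          qf μ P W ((y1, y2), x1, x2) * Real.log (qf μ P W ((y1, y2), x1, x2)) := by
        simp only [Fintype.sum_prod_type]
    _ = ∑ x1, ∑ x2, ((μ x1 * P x1 x2) * Real.log (μ x1 * P x1 x2)
          + (μ x1 * P x1 x2) * ∑ y, W x1 y * Real.log (W x1 y)
          + (μ x1 * P x1 x2) * ∑ y, W x2 y * Real.log (W x2 y)) :=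
        Finset.sum_congr rfl fun x1 _ => Finset.sum_congr rfl fun x2 _ => step x1 x2
    _ = (∑ p : X × X, jointXX μ P p * Real.log (jointXX μ P p))
        + 2 * ∑ x, μ x * ∑ y, W x y * Real.log (W x y) := by
        simp_rw [Finset.sum_add_distrib]
        have h1 : ∀ x1 : X, (∑ x2, (μ x1 * P x1 x2) * ∑ y, W x1 y * Real.log (W x1 y))
            = μ x1 * ∑ y, W x1 y * Real.log (W x1 y) := by
          intro x1
          rw [← Finset.sum_mul, ← Finset.mul_sum, hP1 x1, mul_one]
        have h2 : (∑ x1, ∑ x2, (μ x1 * P x1 x2) * ∑ y, W x2 y * Real.log (W x2 y))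
            = ∑ x, μ x * ∑ y, W x y * Real.log (W x y) := by
          rw [Finset.sum_comm]
          refine Finset.sum_congr rfl fun x2 _ => ?_
          rw [← Finset.sum_mul, hinv x2]
        simp_rw [h1]
        rw [h2, Fintype.sum_prod_type]
        unfold jointXX
        ring
  
theorem core
    (hμ0 : ∀ x, 0 ≤ μ x)
    (hP0 : ∀ x x', 0 ≤ P x x') (hP1 : ∀ x, ∑ x', P x x' = 1)
    (hinv : ∀ x', ∑ x, μ x * P x x' = μ x')
    (hW0 : ∀ x y, 0 ≤ W x y) (hW1 : ∀ x, ∑ y, W x y = 1)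
    (hrev : ∀ x x', μ x * P x x' = μ x' * P x' x) :
    2 * (∑ x, ∑ y, (μ x * Kf P W x y) * Real.log (μ x * Kf P W x y))
      ≤ (∑ p : X × X, jointXX μ P p * Real.log (jointXX μ P p))
        + (∑ p : Y × Y, jointYY μ P W p * Real.log (jointYY μ P W p)) := by
  classical
  have hK0 := Kf_nonneg P W hP0 hW0
  have hQ0 : ∀ z : (Y × Y) × X × X, 0 ≤ qf μ P W z := fun z =>
    mul_nonneg (mul_nonneg (mul_nonneg (hμ0 _) (hW0 _ _)) (hP0 _ _)) (hW0 _ _)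
  have hA0 : ∀ (p : Y × Y) (x : X), 0 ≤ af μ P W p x := fun p x =>
    mul_nonneg (mul_nonneg (hμ0 x) (hW0 _ _)) (hK0 _ _)
  have hB0 : ∀ (p : Y × Y) (x : X), 0 ≤ bf μ P W p x := fun p x =>
    mul_nonneg (mul_nonneg (hμ0 x) (hK0 _ _)) (hW0 _ _)
  have hsumA : ∀ p : Y × Y, ∑ x, af μ P W p x = jointYY μ P W p := by
    intro p
    rw [jointYY_eq_sum]
    exact Finset.sum_congr rfl fun x1 _ => (sum_x2 μ P W p x1).symm
  have hsumB : ∀ p : Y × Y, ∑ x, bf μ P W p x = jointYY μ P W p := by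
    intro p
    rw [jointYY_eq_sum, Finset.sum_comm]
    exact Finset.sum_congr rfl fun x2 _ => (sum_x1 μ P W hrev p x2).symm
  have hC0 : ∀ p : Y × Y, 0 ≤ jointYY μ P W p := by
    intro p
    rw [← hsumA p]
    exact Finset.sum_nonneg fun x _ => hA0 p x
  -- positivity of marginals where q is positive
  have hposA : ∀ (p : Y × Y) (x1 x2 : X), 0 < qf μ P W (p, x1, x2) → 0 < af μ P W p x1 := by
    intro p x1 x2 h
    have h1 : qf μ P W (p, x1, x2) ≤ ∑ x2', qf μ P W (p, x1, x2') :=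
      Finset.single_le_sum (fun i _ => hQ0 (p, x1, i)) (Finset.mem_univ x2)
    rw [sum_x2] at h1
    linarith
  have hposB : ∀ (p : Y × Y) (x1 x2 : X), 0 < qf μ P W (p, x1, x2) → 0 < bf μ P W p x2 := by
    intro p x1 x2 h
    have h1 : qf μ P W (p, x1, x2) ≤ ∑ x1', qf μ P W (p, x1', x2) :=
      Finset.single_le_sum (fun i _ => hQ0 (p, i, x2)) (Finset.mem_univ x1)
    rw [sum_x1 μ P W hrev] at h1
    linarith
  have hposC : ∀ (p : Y × Y) (x1 x2 : X), 0 < qf μ P W (p, x1, x2) → 0 < jointYY μ P W p := by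
    intro p x1 x2 h
    have h1 : af μ P W p x1 ≤ ∑ x, af μ P W p x :=
      Finset.single_le_sum (fun i _ => hA0 p i) (Finset.mem_univ x1)
    rw [hsumA] at h1
    have := hposA p x1 x2 h
    linarith
  -- the reference measure for the Gibbs inequality
  set R : (Y × Y) × X × X → ℝ := fun z =>
    if jointYY μ P W z.1 = 0 then 0
    else af μ P W z.1 z.2.1 * bf μ P W z.1 z.2.2 / jointYY μ P W z.1 with hRdef
  have hR0 : ∀ z, 0 ≤ R z := by
    intro z
    rw [hRdef]
    dsimp only
    split
    · exact le_rfl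
    · exact div_nonneg (mul_nonneg (hA0 _ _) (hB0 _ _)) (hC0 _)
  have hposR : ∀ z, 0 < qf μ P W z → 0 < R z := by
    rintro ⟨p, x1, x2⟩ h
    have hA := hposA p x1 x2 h
    have hB := hposB p x1 x2 h
    have hC := hposC p x1 x2 h
    rw [hRdef]
    dsimp only
    rw [if_neg hC.ne']
    exact div_pos (mul_pos hA hB) hC
  have hRsum : ∑ z, R z ≤ ∑ z, qf μ P W z := by
    rw [Fintype.sum_prod_type (f := R), Fintype.sum_prod_type (f := qf μ P W)]
    refine Finset.sum_le_sum fun p _ => ?_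
    have hq : ∑ w : X × X, qf μ P W (p, w) = jointYY μ P W p := by
      rw [Fintype.sum_prod_type, jointYY_eq_sum]
    rw [hq]
    by_cases hc : jointYY μ P W p = 0
    · simp only [hRdef, hc, if_true, eq_self_iff_true]
      simp [hc]
    · have : ∑ w : X × X, R (p, w)
          = (∑ x, af μ P W p x) * (∑ x, bf μ P W p x) / jointYY μ P W p := by
        simp only [hRdef, if_neg hc]
        rw [← Finset.sum_div, Fintype.sum_prod_type, Finset.sum_mul_sum]
      rw [this, hsumA, hsumB, mul_div_assoc, div_self hc, mul_one]
  -- Gibbs inequality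
  have hgibbs := gibbs (qf μ P W) R hQ0 hR0 hposR hRsum
  -- split the log of R where q is positive
  have hsplit : ∀ z : (Y × Y) × X × X,
      qf μ P W z * Real.log (R z)
        = qf μ P W z * Real.log (af μ P W z.1 z.2.1)
          + qf μ P W z * Real.log (bf μ P W z.1 z.2.2)
          - qf μ P W z * Real.log (jointYY μ P W z.1) := by
    rintro ⟨p, x1, x2⟩
    rcases (hQ0 (p, x1, x2)).eq_or_lt with h | h
    · rw [← h]; ring
    · have hA := hposA p x1 x2 h
      have hB := hposB p x1 x2 h
      have hC := hposC p x1 x2 h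
      rw [hRdef]
      dsimp only
      rw [if_neg hC.ne', Real.log_div (mul_pos hA hB).ne' hC.ne',
        Real.log_mul hA.ne' hB.ne']
      ring
  -- marginalize the three partial sums
  have hSA : ∑ z : (Y × Y) × X × X, qf μ P W z * Real.log (af μ P W z.1 z.2.1)
      = ∑ p : Y × Y, ∑ x, af μ P W p x * Real.log (af μ P W p x) := by
    rw [Fintype.sum_prod_type]
    refine Finset.sum_congr rfl fun p _ => ?_
    rw [Fintype.sum_prod_type]
    refine Finset.sum_congr rfl fun x1 _ => ?_
    dsimp only
    rw [← Finset.sum_mul, sum_x2]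
  have hSB : ∑ z : (Y × Y) × X × X, qf μ P W z * Real.log (bf μ P W z.1 z.2.2)
      = ∑ p : Y × Y, ∑ x, bf μ P W p x * Real.log (bf μ P W p x) := by
    rw [Fintype.sum_prod_type]
    refine Finset.sum_congr rfl fun p _ => ?_
    rw [Fintype.sum_prod_type, Finset.sum_comm]
    refine Finset.sum_congr rfl fun x2 _ => ?_
    dsimp only
    rw [← Finset.sum_mul, sum_x1 μ P W hrev]
  have hSC : ∑ z : (Y × Y) × X × X, qf μ P W z * Real.log (jointYY μ P W z.1)
      = ∑ p : Y × Y, jointYY μ P W p * Real.log (jointYY μ P W p) := by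
    rw [Fintype.sum_prod_type]
    refine Finset.sum_congr rfl fun p _ => ?_
    rw [Fintype.sum_prod_type]
    have : ∀ x1 : X, (∑ x2, qf μ P W (p, x1, x2) * Real.log (jointYY μ P W p))
        = af μ P W p x1 * Real.log (jointYY μ P W p) := by
      intro x1
      rw [← Finset.sum_mul, sum_x2]
    simp_rw [this]
    rw [← Finset.sum_mul, hsumA]
  -- assemble
  have hLHS : ∑ z, qf μ P W z * Real.log (R z)
      = (∑ p : Y × Y, ∑ x, af μ P W p x * Real.log (af μ P W p x))
        + (∑ p : Y × Y, ∑ x, bf μ P W p x * Real.log (bf μ P W p x))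
        - ∑ p : Y × Y, jointYY μ P W p * Real.log (jointYY μ P W p) := by
    calc ∑ z, qf μ P W z * Real.log (R z)
        = ∑ z : (Y × Y) × X × X,
            (qf μ P W z * Real.log (af μ P W z.1 z.2.1)
              + qf μ P W z * Real.log (bf μ P W z.1 z.2.2)
              - qf μ P W z * Real.log (jointYY μ P W z.1)) :=
          Finset.sum_congr rfl fun z _ => hsplit z
      _ = _ := by
          rw [Finset.sum_sub_distrib, Finset.sum_add_distrib, hSA, hSB, hSC]
  rw [hLHS, sum_af_log μ P W hμ0 hP0 hP1 hW0 hW1, sum_bf_log μ P W hμ0 hP0 hP1 hW0 hW1,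
    sum_qf_log μ P W hμ0 hP0 hP1 hinv hW0 hW1] at hgibbs
  linarith

end Core

end CbetaAux

/-- If the Markov chain `X` is reversible (`μ_x P_{x→x'} = μ_{x'} P_{x'→x}`),
then `β ↦ C_β(X,W)` is non-decreasing on `[0,1]`. -/
theorem Cbeta_monotone_of_reversible
    {X Y : Type} [Fintype X] [Fintype Y] [Nonempty X] [Nonempty Y] [DecidableEq X]
    (μ : X → ℝ) (P : X → X → ℝ) (W : X → Y → ℝ)
    (hμ0 : ∀ x, 0 ≤ μ x) (hμ1 : ∑ x, μ x = 1)
    (hP0 : ∀ x x', 0 ≤ P x x') (hP1 : ∀ x, ∑ x', P x x' = 1)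
    (hinv : ∀ x', ∑ x, μ x * P x x' = μ x')
    (hirr : IrreducibleAperiodic (Matrix.of fun a b => P a b))
    (hW0 : ∀ x y, 0 ≤ W x y) (hW1 : ∀ x, ∑ y, W x y = 1)
    (hrev : ∀ x x', μ x * P x x' = μ x' * P x' x) :
    ∀ β β' : ℝ, 0 ≤ β → β ≤ β' → β' ≤ 1 →
      Cbeta μ P W β ≤ Cbeta μ P W β' := by
  intro β β' hβ hββ' hβ'
  have hcore := CbetaAux.core μ P W hμ0 hP0 hP1 hinv hW0 hW1 hrev
  have hsum : ∑ p : X × Y, jointX1Y2 μ P W p * Real.log (jointX1Y2 μ P W p)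
      = ∑ x, ∑ y, (μ x * CbetaAux.Kf P W x y) * Real.log (μ x * CbetaAux.Kf P W x y) := by
    rw [Fintype.sum_prod_type]
    exact Finset.sum_congr rfl fun x _ => Finset.sum_congr rfl fun y _ => by
      rw [CbetaAux.jointX1Y2_eq μ P W (x, y)]
  have hlog2 : 0 < Real.log 2 := Real.log_pos (by norm_num)
  have hkey : 0 ≤ CP μ P W - 2 * CL μ P W := by
    have e1 : CP μ P W - 2 * CL μ P W
        = 2 * ent (jointX1Y2 μ P W) - ent (jointXX μ P) - ent (jointYY μ P W) := by
      unfold CP CL IX1X2 IY1Y2 HY2gY1 HY2gX1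
      ring
    rw [e1, CbetaAux.ent_eq (jointX1Y2 μ P W), CbetaAux.ent_eq (jointXX μ P),
      CbetaAux.ent_eq (jointYY μ P W), hsum]
    set A := ∑ x, ∑ y, (μ x * CbetaAux.Kf P W x y) * Real.log (μ x * CbetaAux.Kf P W x y)
      with hA
    set B := ∑ p : X × X, jointXX μ P p * Real.log (jointXX μ P p) with hB
    set C := ∑ p : Y × Y, jointYY μ P W p * Real.log (jointYY μ P W p) with hC
    have hre : 2 * (-A / Real.log 2) - -B / Real.log 2 - -C / Real.log 2
        = (B + C - 2 * A) / Real.log 2 := by ring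
    rw [hre]
    exact div_nonneg (by linarith [hcore]) hlog2.le
  have e2 : Cbeta μ P W β' - Cbeta μ P W β = (β' - β) * (CP μ P W - 2 * CL μ P W) := by
    unfold Cbeta; ring
  have := mul_nonneg (sub_nonneg.2 hββ') hkey
  linarith
end

section
/- For a surjective function g : 𝒳 → 𝒴 with Y_k = g(X_k), the lumpability cost admits the representation and relaxation: C_L(X,g) = H(Y_2|Y_1) − H(Y_2|X_1) = I(Y_2; X_1 | Y_1) ≤ I(X_2; X_1 | Y_1) = I(X_1; X_2) − I(X_2; Y_1). -/
open Filter Real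

/-!
Since `W` is deterministic, each `Y_k = g X_k` is a function of `X_k`, so adjoining it to a
tuple containing `X_k` leaves the entropy unchanged: `H(X_1,Y_1) = H(X_1)`,
`H(X_1,Y_1,Y_2) = H(X_1,Y_2)` and `H(X_1,X_2,Y_1) = H(X_1,X_2)`. With these identities both
equalities are rearrangements of the definitions, and the inequality becomes the submodularity
`H(X_1,X_2) + H(g X_1, g X_2) ≤ H(X_1, g X_2) + H(g X_1, X_2)`. That is Gibbs' inequality
`∑ p log (q / p) ≤ ∑ q - ∑ p` for the joint law `p` of `(X_1, X_2)` against
`q(x, x') = p(x, g x') p(g x, x') / p(g x, g x')`, built from the three marginals of `p`,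
whose total mass is again `∑ p`.
-/

open Finset

section Pushforward

variable {α β γ : Type*} [Fintype α] [DecidableEq β] [DecidableEq γ]

noncomputable def pushforward (f : α → β) (p : α → ℝ) (b : β) : ℝ :=
  ∑ a, if f a = b then p a else 0

theorem sum_pushforward_mul [Fintype β] (f : α → β) (p : α → ℝ) (φ : β → ℝ) :
    ∑ b, pushforward f p b * φ b = ∑ a, p a * φ (f a) := by
  simp only [pushforward, sum_mul, ite_mul, zero_mul]
  rw [sum_comm]
  simp

theorem sum_pushforward [Fintype β] (f : α → β) (p : α → ℝ) :
    ∑ b, pushforward f p b = ∑ a, p a := by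
  simpa using sum_pushforward_mul f p 1

theorem le_pushforward_apply (f : α → β) {p : α → ℝ} (hp : ∀ a, 0 ≤ p a) (a : α) :
    p a ≤ pushforward f p (f a) := by
  unfold pushforward
  simpa using single_le_sum (f := fun a' => if f a' = f a then p a' else 0)
    (fun a' _ => by split_ifs <;> simp [hp]) (mem_univ a)

theorem pushforward_apply_of_injective {f : α → β} (hf : f.Injective) (p : α → ℝ) (a : α) :
    pushforward f p (f a) = p a := by
  rw [pushforward, Fintype.sum_eq_single a fun a' ha' => if_neg (hf.ne ha'), if_pos rfl]

theorem pushforward_pushforward [Fintype β] (g : β → γ) (f : α → β) (p : α → ℝ) :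
    pushforward g (pushforward f p) = pushforward (g ∘ f) p := by
  funext c
  simp only [pushforward, Function.comp_apply]
  calc _ = ∑ b, ∑ a, if f a = b then (if g b = c then p a else 0) else 0 := by
        refine sum_congr rfl fun b _ => ?_
        split_ifs <;> simp [*]
    _ = _ := by
        rw [sum_comm]
        simp

end Pushforward

theorem mul_log_add_log_sub_le {p x y z : ℝ} (hp : 0 ≤ p) (hpx : p ≤ x) (hpy : p ≤ y)
    (hpz : p ≤ z) : p * (log x + log y - log p - log z) ≤ x * y / z - p := by
  rcases hp.eq_or_lt with rfl | hp
  · simp only [zero_mul, sub_zero]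
    have := hpz
    positivity
  have hx := hp.trans_le hpx
  have hy := hp.trans_le hpy
  have hz := hp.trans_le hpz
  calc p * (log x + log y - log p - log z) = p * log (x * y / (p * z)) := by
        rw [log_div (by positivity) (by positivity), log_mul hx.ne' hy.ne',
          log_mul hp.ne' hz.ne']
        ring
    _ ≤ p * (x * y / (p * z) - 1) :=
        mul_le_mul_of_nonneg_left (log_le_sub_one_of_pos (by positivity)) hp.le
    _ = x * y / z - p := by field_simp

section Entropy

variable {ι κ : Type} [Fintype ι] [Fintype κ] [DecidableEq κ]

theorem ent_eq_neg_sum_mul_log_div (p : ι → ℝ) :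
    ent p = -(∑ i, p i * log (p i)) / log 2 := by
  simp only [ent, logb, mul_div_assoc', ← sum_div, neg_div]

theorem ent_pushforward (f : ι → κ) (p : ι → ℝ) :
    ent (pushforward f p) = -(∑ i, p i * log (pushforward f p (f i))) / log 2 := by
  rw [ent_eq_neg_sum_mul_log_div, sum_pushforward_mul f p fun k => log (pushforward f p k)]

theorem ent_pushforward_of_injective {f : ι → κ} (hf : f.Injective) (p : ι → ℝ) :
    ent (pushforward f p) = ent p := by
  rw [ent_pushforward, ent_eq_neg_sum_mul_log_div]
  simp only [pushforward_apply_of_injective hf]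

end Entropy

section Submodularity

variable {α β γ δ : Type} [Fintype α] [Fintype β] [Fintype γ] [Fintype δ]
  [DecidableEq γ] [DecidableEq δ]

theorem sum_prodMap_mul_mul (f : α → γ) (h : β → δ) (u : α × δ → ℝ) (v : γ × β → ℝ)
    (w : γ × δ → ℝ) :
    ∑ i, u (Prod.map id h i) * v (Prod.map f id i) * w (Prod.map f h i) =
      ∑ j, pushforward (Prod.map f id) u j * pushforward (Prod.map id h) v j * w j := by
  simp_rw [mul_assoc, sum_pushforward_mul]
  simp only [pushforward, Fintype.sum_prod_type, Prod.map, id, Prod.mk.injEq, ite_and, sum_mul,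
    mul_sum]
  refine sum_congr rfl fun a _ => ?_
  simp only [ite_mul, mul_ite, zero_mul, mul_zero, sum_ite_irrel, sum_const_zero, sum_ite_eq',
    mem_univ, if_true]
  conv_rhs => rw [sum_comm]
  simp

theorem ent_add_ent_pushforward_prodMap_le [DecidableEq α] [DecidableEq β] {p : α × β → ℝ}
    (hp : ∀ i, 0 ≤ p i) (f : α → γ) (h : β → δ) :
    ent p + ent (pushforward (Prod.map f h) p) ≤
      ent (pushforward (Prod.map id h) p) + ent (pushforward (Prod.map f id) p) := by
  rw [ent_eq_neg_sum_mul_log_div, ent_pushforward, ent_pushforward, ent_pushforward, ← add_div,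
    ← add_div, div_le_div_iff_of_pos_right (log_pos one_lt_two)]
  set p₁ := pushforward (Prod.map id h) p
  set p₂ := pushforward (Prod.map f id) p
  set p₃ := pushforward (Prod.map f h) p
  have hp₁₃ : ∀ j, p₃ j = pushforward (Prod.map f id) p₁ j := by
    simp [p₁, p₃, pushforward_pushforward, Prod.map_comp_map]
  have hp₂₃ : ∀ j, p₃ j = pushforward (Prod.map id h) p₂ j := by
    simp [p₂, p₃, pushforward_pushforward, Prod.map_comp_map]
  have hq : ∑ i, p₁ (Prod.map id h i) * p₂ (Prod.map f id i) * (p₃ (Prod.map f h i))⁻¹ =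
      ∑ i, p i := by
    rw [sum_prodMap_mul_mul f h p₁ p₂ fun j => (p₃ j)⁻¹]
    -- `x * x * x⁻¹ = x` holds also at `x = 0`
    simp_rw [← hp₁₃, ← hp₂₃, mul_self_mul_inv]
    exact sum_pushforward _ _
  have hgibbs := sum_le_sum fun i (_ : i ∈ univ) => mul_log_add_log_sub_le (hp i)
    (le_pushforward_apply (Prod.map id h) hp i) (le_pushforward_apply (Prod.map f id) hp i)
    (le_pushforward_apply (Prod.map f h) hp i)
  simp only [div_eq_mul_inv, sum_sub_distrib, sum_add_distrib, mul_add, mul_sub] at hgibbs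
  linarith

end Submodularity

section DeterministicAggregation

variable {X Y : Type} [Fintype X] [DecidableEq Y] (μ : X → ℝ) (P : X → X → ℝ) (g : X → Y)

theorem jointX1Y1_detW [DecidableEq X] :
    jointX1Y1 μ (detW g) = pushforward (fun x => (x, g x)) μ := by
  funext ⟨x, y⟩
  simp [jointX1Y1, detW, pushforward, ite_and]

theorem jointX1Y2_detW [DecidableEq X] :
    jointX1Y2 μ P (detW g) = pushforward (Prod.map id g) (jointXX μ P) := by
  funext ⟨x, y⟩
  simp [jointX1Y2, jointXX, detW, pushforward, ite_and, Fintype.sum_prod_type]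

theorem jointX2Y1_detW [DecidableEq X] :
    jointX2Y1 μ P (detW g) = pushforward (Prod.swap ∘ Prod.map g id) (jointXX μ P) := by
  funext ⟨x, y⟩
  simp [jointX2Y1, jointXX, detW, pushforward, ite_and, Fintype.sum_prod_type]

theorem jointYY_detW [Fintype Y] :
    jointYY μ P (detW g) = pushforward (Prod.map g g) (jointXX μ P) := by
  funext ⟨y, y'⟩
  simp only [jointYY, detW, mul_ite, mul_one, mul_zero, ite_mul, zero_mul, pushforward, jointXX,
    Fintype.sum_prod_type, Prod.map_apply, Prod.mk.injEq, ite_and, sum_ite_irrel, sum_const_zero]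
  refine sum_congr rfl fun x _ => ?_
  split_ifs <;> simp

theorem jointX1X2Y1_detW [DecidableEq X] :
    jointX1X2Y1 μ P (detW g) = pushforward (fun i => (i.1, i.2, g i.1)) (jointXX μ P) := by
  funext ⟨x, x', y⟩
  simp [jointX1X2Y1, jointXX, detW, pushforward, ite_and, Fintype.sum_prod_type]

theorem jointX1Y1Y2_detW [Fintype Y] [DecidableEq X] :
    jointX1Y1Y2 μ P (detW g) =
      pushforward (fun i => (i.1, g i.1, i.2)) (jointX1Y2 μ P (detW g)) := by
  funext ⟨x, y, y'⟩
  simp only [jointX1Y1Y2, detW, mul_ite, mul_one, mul_zero, ite_mul, zero_mul, pushforward,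
    Prod.mk.injEq, jointX1Y2, ite_and, Fintype.sum_prod_type, sum_ite_irrel, sum_ite_eq', mem_univ,
    if_true, sum_const_zero]
  split_ifs <;> simp

variable [Fintype Y] [DecidableEq X]

theorem ent_jointX1Y1_detW : ent (jointX1Y1 μ (detW g)) = ent μ := by
  rw [jointX1Y1_detW]
  exact ent_pushforward_of_injective (fun x x' h => congrArg Prod.fst h) μ

theorem ent_jointX1Y1Y2_detW :
    ent (jointX1Y1Y2 μ P (detW g)) = ent (jointX1Y2 μ P (detW g)) := by
  rw [jointX1Y1Y2_detW]
  refine ent_pushforward_of_injective (fun i j h => ?_) _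
  simp only [Prod.mk.injEq] at h
  exact Prod.ext h.1 h.2.2

theorem ent_jointX1X2Y1_detW : ent (jointX1X2Y1 μ P (detW g)) = ent (jointXX μ P) := by
  rw [jointX1X2Y1_detW]
  refine ent_pushforward_of_injective (fun i j h => ?_) _
  simp only [Prod.mk.injEq] at h
  exact Prod.ext h.1 h.2.1

theorem ent_jointXX_add_ent_jointYY_detW_le (hμ : ∀ x, 0 ≤ μ x) (hP : ∀ x x', 0 ≤ P x x') :
    ent (jointXX μ P) + ent (jointYY μ P (detW g)) ≤
      ent (jointX1Y2 μ P (detW g)) + ent (jointX2Y1 μ P (detW g)) := by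
  rw [jointYY_detW, jointX1Y2_detW, jointX2Y1_detW, ← pushforward_pushforward,
    ent_pushforward_of_injective Prod.swap_injective]
  exact ent_add_ent_pushforward_prodMap_le (fun i => mul_nonneg (hμ _) (hP _ _)) g g

end DeterministicAggregation

theorem CL_relaxation_general
    {X Y : Type} [Fintype X] [Fintype Y]
    [DecidableEq X] [DecidableEq Y]
    (μ : X → ℝ) (P : X → X → ℝ) (g : X → Y)
    (hμ0 : ∀ x, 0 ≤ μ x)
    (hP0 : ∀ x x', 0 ≤ P x x')
    : CL μ P (detW g) = IY2X1gY1 μ P (detW g) ∧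
      IY2X1gY1 μ P (detW g) ≤ IX2X1gY1 μ P (detW g) ∧
      IX2X1gY1 μ P (detW g) = IX1X2 μ P - IX2Y1 μ P (detW g) := by
  have hX1Y1 := ent_jointX1Y1_detW μ g
  have hX1Y1Y2 := ent_jointX1Y1Y2_detW μ P g
  have hX1X2Y1 := ent_jointX1X2Y1_detW μ P g
  have hsubmod := ent_jointXX_add_ent_jointYY_detW_le μ P g hμ0 hP0
  refine ⟨?_, ?_, ?_⟩
  · rw [CL, HY2gY1, HY2gX1, IY2X1gY1, hX1Y1, hX1Y1Y2]
    ring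
  · rw [IY2X1gY1, IX2X1gY1, hX1Y1Y2, hX1X2Y1]
    linarith
  · rw [IX2X1gY1, IX1X2, IX2Y1, hX1Y1, hX1X2Y1]
    ring

/-- For a surjective deterministic aggregation `g` with `Y_k = g(X_k)`,
the lumpability cost admits the representation and relaxation:
`C_L(X,g) = H(Y_2|Y_1) − H(Y_2|X_1) = I(Y_2;X_1|Y_1) ≤ I(X_2;X_1|Y_1)
 = I(X_1;X_2) − I(X_2;Y_1)`. -/
theorem CL_relaxation
    {X Y : Type} [Fintype X] [Fintype Y] [Nonempty X] [Nonempty Y]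
    [DecidableEq X] [DecidableEq Y]
    (μ : X → ℝ) (P : X → X → ℝ) (g : X → Y) (hg : Function.Surjective g)
    (hμ0 : ∀ x, 0 ≤ μ x) (hμ1 : ∑ x, μ x = 1)
    (hP0 : ∀ x x', 0 ≤ P x x') (hP1 : ∀ x, ∑ x', P x x' = 1)
    (hinv : ∀ x', ∑ x, μ x * P x x' = μ x')
    (hirr : IrreducibleAperiodic (Matrix.of fun a b => P a b))
    : CL μ P (detW g) = IY2X1gY1 μ P (detW g) ∧
      IY2X1gY1 μ P (detW g) ≤ IX2X1gY1 μ P (detW g) ∧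
      IX2X1gY1 μ P (detW g) = IX1X2 μ P - IX2Y1 μ P (detW g) :=
  CL_relaxation_general μ P g hμ0 hP0
end
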